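/- Let 0 → L →α M →β N → 0 be a degreewise pure exact sequence of chain complexes of R-modules. Then: (a) L is pure-acyclic if and only if β is a pure quasi-isomorphism; (b) N is pure-acyclic if and only if α is a pure quasi-isomorphism. Moreover, if L or N is pure-acyclic, then the sequence is a pure exact sequence in the category of R-complexes. In particular, a pure-acyclic subcomplex is a pure subcomplex if and only if it is a degreewise pure subcomplex. -/

import Mathlib

/- Common definitions: chain complexes of modules, purity, pure-acyclicity,
   pure quasi-isomorphisms, flavors of minimality, semi-flat, semi-projective and
   semi-injective complexes, and ring-theoretic conditions, following the paper. -/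

open CategoryTheory CategoryTheory.Limits

universe u

namespace PaperPM

variable (R : Type u) [Ring R]

/-- Chain complexes of left `R`-modules, indexed by `ℤ`. -/
abbrev Cx := ChainComplex (ModuleCat.{u} R) ℤ

section ModuleLevel

variable {L M N : Type u} [AddCommGroup L] [AddCommGroup M] [AddCommGroup N]
  [Module R L] [Module R M] [Module R N]

/-- `0 → L → M → N → 0` is a short exact sequence of modules. -/
def ModSES (f : L →ₗ[R] M) (g : M →ₗ[R] N) : Prop :=
  Function.Injective f ∧ Function.Surjective g ∧ Function.Exact f g

/-- The sequence `0 → Hom(A,L) → Hom(A,M) → Hom(A,N) → 0` is exact for every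
finitely presented module `A`; together with `ModSES` this is purity. -/
def HomExact (f : L →ₗ[R] M) (g : M →ₗ[R] N) : Prop :=
  ∀ (A : Type u) [AddCommGroup A] [Module R A], Module.FinitePresentation R A →
    Function.Injective (fun h : A →ₗ[R] L => f ∘ₗ h) ∧
    Function.Exact (fun h : A →ₗ[R] L => f ∘ₗ h) (fun h : A →ₗ[R] M => g ∘ₗ h) ∧
    Function.Surjective (fun h : A →ₗ[R] M => g ∘ₗ h)

/-- A pure short exact sequence of modules. -/
def PureSES (f : L →ₗ[R] M) (g : M →ₗ[R] N) : Prop :=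
  ModSES R f g ∧ HomExact R f g

end ModuleLevel

/-- A module `F` is flat iff every short exact sequence `0 → L → M → F → 0` is pure. -/
def FlatModule (F : Type u) [AddCommGroup F] [Module R F] : Prop :=
  ∀ (L M : Type u) [AddCommGroup L] [AddCommGroup M] [Module R L] [Module R M]
    (f : L →ₗ[R] M) (g : M →ₗ[R] F), ModSES R f g → HomExact R f g

/-- A module `P` is pure-projective if `Hom(P,−)` leaves every pure exact sequence exact. -/
def PureProjectiveModule (P : Type u) [AddCommGroup P] [Module R P] : Prop :=
  ∀ (L M N : Type u) [AddCommGroup L] [AddCommGroup M] [AddCommGroup N]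
    [Module R L] [Module R M] [Module R N] (f : L →ₗ[R] M) (g : M →ₗ[R] N),
    PureSES R f g →
      Function.Injective (fun h : P →ₗ[R] L => f ∘ₗ h) ∧
      Function.Exact (fun h : P →ₗ[R] L => f ∘ₗ h) (fun h : P →ₗ[R] M => g ∘ₗ h) ∧
      Function.Surjective (fun h : P →ₗ[R] M => g ∘ₗ h)

/-- A module `E` is pure-injective if `Hom(−,E)` leaves every pure exact sequence exact. -/
def PureInjectiveModule (E : Type u) [AddCommGroup E] [Module R E] : Prop :=
  ∀ (L M N : Type u) [AddCommGroup L] [AddCommGroup M] [AddCommGroup N]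
    [Module R L] [Module R M] [Module R N] (f : L →ₗ[R] M) (g : M →ₗ[R] N),
    PureSES R f g →
      Function.Injective (fun h : N →ₗ[R] E => h ∘ₗ g) ∧
      Function.Exact (fun h : N →ₗ[R] E => h ∘ₗ g) (fun h : M →ₗ[R] E => h ∘ₗ f) ∧
      Function.Surjective (fun h : M →ₗ[R] E => h ∘ₗ f)

/-- `R` is von Neumann regular: every (left) `R`-module is flat. -/
def VonNeumannRegular : Prop :=
  ∀ (M : Type u) [AddCommGroup M] [Module R M], FlatModule R M

/-- `R` is left perfect: every flat left `R`-module is projective. -/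
def LeftPerfect : Prop :=
  ∀ (M : Type u) [AddCommGroup M] [Module R M], FlatModule R M → Module.Projective R M

/-- `R` is semi-perfect: every finitely generated flat left `R`-module is projective. -/
def SemiPerfect : Prop :=
  ∀ (M : Type u) [AddCommGroup M] [Module R M],
    Module.Finite R M → FlatModule R M → Module.Projective R M

/-- A complex is acyclic if its homology vanishes, i.e. it is exact at every degree. -/
def Acyclic (M : Cx R) : Prop :=
  ∀ i : ℤ, Function.Exact (M.d (i + 1) i) (M.d i (i - 1))

/-- The cycle submodule `Z_i(M)`. -/
noncomputable def cyc (M : Cx R) (i : ℤ) : Submodule R (M.X i) :=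
  LinearMap.ker (M.d i (i - 1)).hom

lemma d_mem_cyc (M : Cx R) (i : ℤ) (x : M.X i) :
    M.d i (i - 1) x ∈ cyc R M (i - 1) := by
  have h := LinearMap.congr_fun (congrArg ModuleCat.Hom.hom (M.d_comp_d i (i - 1) (i - 1 - 1))) x
  rw [ModuleCat.hom_comp, LinearMap.comp_apply, ModuleCat.hom_zero, LinearMap.zero_apply] at h
  simpa [cyc, LinearMap.mem_ker] using h

/-- The map `M_i → Z_{i-1}(M)` induced by the differential. -/
noncomputable def cycMap (M : Cx R) (i : ℤ) : M.X i →ₗ[R] cyc R M (i - 1) :=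
  LinearMap.codRestrict (cyc R M (i - 1)) (M.d i (i - 1)).hom (d_mem_cyc R M i)

/-- A complex is pure-acyclic if it is acyclic and each sequence
`0 → Z_i(M) → M_i → Z_{i-1}(M) → 0` is pure. -/
def PureAcyclic (M : Cx R) : Prop :=
  ∀ i : ℤ, PureSES R (cyc R M i).subtype (cycMap R M i)

/-- A morphism of complexes is null-homotopic. -/
def NullHomotopic {M N : Cx R} (f : M ⟶ N) : Prop :=
  Nonempty (Homotopy f 0)

/-- A complex is contractible if its identity is null-homotopic. -/
def Contractible (M : Cx R) : Prop :=
  Nonempty (Homotopy (𝟙 M) 0)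

/-- A morphism of complexes is a homotopy equivalence: it has an inverse up to
chain homotopy. -/
def IsHomotopyEquiv {M N : Cx R} (α : M ⟶ N) : Prop :=
  ∃ β : N ⟶ M, Nonempty (Homotopy (α ≫ β) (𝟙 M)) ∧ Nonempty (Homotopy (β ≫ α) (𝟙 N))

/-- A complex is minimal if every homotopy equivalence `M → M` is an isomorphism. -/
def Minimal (M : Cx R) : Prop :=
  ∀ α : M ⟶ M, IsHomotopyEquiv R α → IsIso α

/-- A morphism `α` of complexes is a pure quasi-isomorphism iff its mapping cone is
pure-acyclic, equivalently iff `Hom(A, α)` is a quasi-isomorphism for every finitely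
presented module `A`. -/
def PureQuasiIso {M N : Cx R} (α : M ⟶ N) : Prop :=
  ∀ (A : ModuleCat.{u} R), Module.FinitePresentation R A →
    QuasiIso (((preadditiveCoyoneda.obj (Opposite.op A)).mapHomologicalComplex
      (ComplexShape.down ℤ)).map α)

/-- `0 → L → M → N → 0` is a short exact sequence of complexes. -/
def CxSES {L M N : Cx R} (α : L ⟶ M) (β : M ⟶ N) : Prop :=
  ∀ i : ℤ, Function.Injective (α.f i) ∧ Function.Surjective (β.f i) ∧
    Function.Exact (α.f i) (β.f i)

/-- A short exact sequence of complexes is degreewise pure. -/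
def DegreewisePure {L M N : Cx R} (α : L ⟶ M) (β : M ⟶ N) : Prop :=
  ∀ i : ℤ, HomExact R (α.f i).hom (β.f i).hom

/-- A short exact sequence of complexes is degreewise split. -/
def DegreewiseSplit {L M N : Cx R} (α : L ⟶ M) (β : M ⟶ N) : Prop :=
  ∀ i : ℤ, ∃ ρ : M.X i ⟶ L.X i, α.f i ≫ ρ = 𝟙 (L.X i)

/-- A bounded complex of finitely presented modules. -/
def BoundedFPCx (A : Cx R) : Prop :=
  (∀ i, Module.FinitePresentation R (A.X i)) ∧
  ∃ a b : ℤ, ∀ i, (i < a ∨ b < i) → Subsingleton (A.X i)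

/-- Purity in the category of complexes: the sequence of chain-map groups
`0 → Hom(A,L) → Hom(A,M) → Hom(A,N) → 0` is exact for every bounded complex `A`
of finitely presented modules. -/
def CxPure {L M N : Cx R} (α : L ⟶ M) (β : M ⟶ N) : Prop :=
  ∀ A : Cx R, BoundedFPCx R A →
    Function.Injective (fun h : A ⟶ L => h ≫ α) ∧
    Function.Exact (fun h : A ⟶ L => h ≫ α) (fun h : A ⟶ M => h ≫ β) ∧
    Function.Surjective (fun h : A ⟶ M => h ≫ β)

/-- A complex is pure-minimal if the zero complex is its only pure-acyclic pure
subcomplex. -/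
def PureMinimal (M : Cx R) : Prop :=
  ∀ (P Q : Cx R) (ι : P ⟶ M) (π : M ⟶ Q),
    CxSES R ι π → CxPure R ι π → PureAcyclic R P → IsZero P

/-- A complex is split-minimal if the zero complex is its only contractible split
subcomplex (direct summand). -/
def SplitMinimal (M : Cx R) : Prop :=
  ∀ (P : Cx R) (ι : P ⟶ M) (ρ : M ⟶ P), ι ≫ ρ = 𝟙 P → Contractible R P → IsZero P

/-- A complex is semi-projective if it consists of projective modules and `Hom(P,−)`
preserves acyclicity; the latter amounts to every chain map into an acyclic complex
being null-homotopic. -/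
def SemiProjective (P : Cx R) : Prop :=
  (∀ i, Module.Projective R (P.X i)) ∧
  ∀ N : Cx R, Acyclic R N → ∀ f : P ⟶ N, NullHomotopic R f

/-- A complex is semi-injective if it consists of injective modules and `Hom(−,I)`
preserves acyclicity; the latter amounts to every chain map from an acyclic complex
being null-homotopic. -/
def SemiInjective (I : Cx R) : Prop :=
  (∀ i, Module.Injective R (I.X i)) ∧
  ∀ N : Cx R, Acyclic R N → ∀ f : N ⟶ I, NullHomotopic R f

section Dual

/-- The scalar action making the character group `Hom_ℤ(W, ℚ/ℤ)` of a right
`R`-module `W` a left `R`-module. -/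
noncomputable instance charSMul (W : Type u) [AddCommGroup W] [Module Rᵐᵒᵖ W] :
    SMul R (CharacterModule W) :=
  ⟨fun r f => f.comp (DistribMulAction.toAddMonoidHom W (MulOpposite.op r))⟩

/-- The left `R`-module structure on the character group of a right `R`-module. -/
noncomputable instance charModule (W : Type u) [AddCommGroup W] [Module Rᵐᵒᵖ W] :
    Module R (CharacterModule W) where
  one_smul f := CharacterModule.ext _ fun w => by
    show f (MulOpposite.op (1 : R) • w) = f w
    rw [MulOpposite.op_one, one_smul]
  mul_smul r s f := CharacterModule.ext _ fun w => by
    show f (MulOpposite.op (r * s) • w) = f (MulOpposite.op s • MulOpposite.op r • w)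
    rw [MulOpposite.op_mul, mul_smul]
  smul_zero r := CharacterModule.ext _ fun w => rfl
  smul_add r f g := CharacterModule.ext _ fun w => rfl
  add_smul r s f := CharacterModule.ext _ fun w => by
    show f (MulOpposite.op (r + s) • w) = f (MulOpposite.op r • w) + f (MulOpposite.op s • w)
    rw [MulOpposite.op_add, add_smul, map_add]
  zero_smul f := CharacterModule.ext _ fun w => by
    show f (MulOpposite.op (0 : R) • w) = 0
    rw [MulOpposite.op_zero, zero_smul, map_zero]

/-- The character module of a right `R`-module, as a left `R`-module. -/
noncomputable def dualMod (W : ModuleCat.{u} Rᵐᵒᵖ) : ModuleCat.{u} R :=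
  ModuleCat.of R (CharacterModule W)

/-- The dual of a map of right `R`-modules. -/
noncomputable def dualMap {W W' : ModuleCat.{u} Rᵐᵒᵖ} (g : W ⟶ W') :
    dualMod R W' ⟶ dualMod R W :=
  ModuleCat.ofHom <|
    { toFun := fun (f : CharacterModule ↥W') => (f.comp g.hom.toAddMonoidHom : CharacterModule ↥W),
      map_add' := fun _ _ => rfl,
      map_smul' := fun r (f : CharacterModule ↥W') => CharacterModule.ext _ (fun w =>
        congrArg (fun x => f x) (g.hom.map_smul (MulOpposite.op r) w).symm) }

lemma dualMap_comp {W W' W'' : ModuleCat.{u} Rᵐᵒᵖ} (g : W ⟶ W') (h : W' ⟶ W'') :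
    dualMap R (g ≫ h) = dualMap R h ≫ dualMap R g := rfl

lemma dualMap_zero {W W' : ModuleCat.{u} Rᵐᵒᵖ} : dualMap R (0 : W ⟶ W') = 0 :=
  ModuleCat.hom_ext (LinearMap.ext (fun (f : CharacterModule ↥W') =>
    CharacterModule.ext _ (fun _ => map_zero f)))

/-- The character dual of a complex `N` of right `R`-modules, as a complex of left
`R`-modules: `(N⁺)_i = (N_{-i})⁺`. -/
noncomputable def dualCx (N : ChainComplex (ModuleCat.{u} Rᵐᵒᵖ) ℤ) : Cx R :=
  ChainComplex.of (fun i => dualMod R (N.X (-i)))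
    (fun i => dualMap R (N.d (-i) (-(i + 1))))
    (fun n => by rw [← dualMap_comp, N.d_comp_d, dualMap_zero])

/-- A complex is semi-flat if it consists of flat modules and `− ⊗ F` preserves
acyclicity; by character-module duality the latter amounts to every chain map into
the character dual of an acyclic complex of right `R`-modules being null-homotopic. -/
def SemiFlat (F : Cx R) : Prop :=
  (∀ i, FlatModule R (F.X i)) ∧
  ∀ N : ChainComplex (ModuleCat.{u} Rᵐᵒᵖ) ℤ, Acyclic Rᵐᵒᵖ N →
    ∀ f : F ⟶ dualCx R N, NullHomotopic R f

end Dual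

/-- Two complexes are isomorphic in the derived category iff they are linked by a
roof of quasi-isomorphisms. -/
def DerivedIso (M N : Cx R) : Prop :=
  ∃ (W : Cx R) (f : W ⟶ M) (g : W ⟶ N), QuasiIso f ∧ QuasiIso g

/-- The flat dimension of `M` is at most `n`: `M` is isomorphic in the derived
category to a complex of flat modules concentrated in degrees `≤ n`. -/
def FdLe (M : Cx R) (n : ℤ) : Prop :=
  ∃ F : Cx R, (∀ i, FlatModule R (F.X i)) ∧ (∀ i, n < i → Subsingleton (F.X i)) ∧
    DerivedIso R M F

/-- The projective dimension of `M` is at most `n`: `M` is isomorphic in the derived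
category to a complex of projective modules concentrated in degrees `≤ n`. -/
def PdLe (M : Cx R) (n : ℤ) : Prop :=
  ∃ P : Cx R, (∀ i, Module.Projective R (P.X i)) ∧ (∀ i, n < i → Subsingleton (P.X i)) ∧
    DerivedIso R M P


/-!
Applying `Hom(A, −)`, for `A` finitely presented, to a degreewise pure exact sequence gives a short
exact sequence of complexes of abelian groups, and a complex `K` is pure-acyclic exactly when all
the complexes `Hom(A, K)` are acyclic; (a) and (b) then follow from the long exact homology
sequence.

For purity in the category of complexes one must lift chain maps `g : A → N` along `β`, where `A`
is a bounded complex of finitely presented modules. Boundedness lets one build, degree by degree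
from below, a preimage under the differential of any cycle of `Hom(A, K)` when `K` is
pure-acyclic. If `L` is pure-acyclic, a degreewise lift of `g` fails to commute with the
differentials by a cycle of `Hom(A, L)`, and correcting the lift by a preimage of that cycle gives
a chain map. If `N` is pure-acyclic, `g` itself is null-homotopic, and a degreewise lift of the
homotopy yields a lift of `g`. Conversely, chain maps out of the disk complex `A --𝟙--> A` in
degrees `i, i - 1` are the maps `A → M_i`, so purity as complexes gives degreewise purity.
-/

section ModuleLevel

variable {R}
variable {L M N : Type u} [AddCommGroup L] [AddCommGroup M] [AddCommGroup N]
  [Module R L] [Module R M] [Module R N]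

lemma ModSES.exists_comp_eq {f : L →ₗ[R] M} {g : M →ₗ[R] N} (hfg : ModSES R f g)
    {A : Type u} [AddCommGroup A] [Module R A] (y : A →ₗ[R] M) (hy : g ∘ₗ y = 0) :
    ∃ x : A →ₗ[R] L, f ∘ₗ x = y := by
  have hmem : ∀ a, y a ∈ LinearMap.range f := fun a =>
    hfg.2.2.linearMap_ker_eq ▸ LinearMap.congr_fun hy a
  refine ⟨(LinearEquiv.ofInjective f hfg.1).symm ∘ₗ y.codRestrict _ hmem, ?_⟩
  ext a
  simp

lemma homExact_iff_surjective {f : L →ₗ[R] M} {g : M →ₗ[R] N} (hfg : ModSES R f g) :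
    HomExact R f g ↔ ∀ (A : Type u) [AddCommGroup A] [Module R A],
      Module.FinitePresentation R A → Function.Surjective (fun h : A →ₗ[R] M => g ∘ₗ h) := by
  refine ⟨fun h A _ _ hA => (h A hA).2.2, fun h A _ _ hA => ⟨?_, fun y => ⟨?_, ?_⟩, h A hA⟩⟩
  · exact fun x x' hxx' => LinearMap.ext fun a => hfg.1 (LinearMap.congr_fun hxx' a)
  · exact hfg.exists_comp_eq y
  · rintro ⟨x, rfl⟩
    show g ∘ₗ f ∘ₗ x = 0
    rw [← LinearMap.comp_assoc, hfg.2.2.linearMap_comp_eq_zero, LinearMap.zero_comp]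

lemma surjective_of_surjective_comp {g : M →ₗ[R] N}
    (hg : Function.Surjective (fun h : R →ₗ[R] M => g ∘ₗ h)) : Function.Surjective g := by
  intro y
  obtain ⟨h, hh⟩ := hg (LinearMap.toSpanSingleton R N y)
  exact ⟨h 1, by simpa using LinearMap.congr_fun hh 1⟩

end ModuleLevel

section Cycles

variable {R}

lemma surjective_comp_cycMap_iff (K : Cx R) (i : ℤ) (A : ModuleCat.{u} R) :
    Function.Surjective (fun h : A →ₗ[R] K.X i => cycMap R K i ∘ₗ h) ↔
      ∀ g : A ⟶ K.X (i - 1), g ≫ K.d (i - 1) (i - 1 - 1) = 0 →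
        ∃ h : A ⟶ K.X i, h ≫ K.d i (i - 1) = g := by
  constructor
  · intro hs g hg
    obtain ⟨h, hh⟩ := hs (g.hom.codRestrict _ fun a => congr($hg a))
    exact ⟨ModuleCat.ofHom h, ModuleCat.hom_ext (congrArg ((cyc R K (i - 1)).subtype ∘ₗ ·) hh)⟩
  · intro hl z
    obtain ⟨h, hh⟩ := hl (ModuleCat.ofHom ((cyc R K (i - 1)).subtype ∘ₗ z))
      (by ext a; exact (z a).2)
    exact ⟨h.hom, by ext a; exact congr($hh a)⟩

lemma exact_subtype_cycMap (K : Cx R) (i : ℤ) :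
    Function.Exact (cyc R K i).subtype (cycMap R K i) := by
  rw [LinearMap.exact_iff, cycMap, LinearMap.ker_codRestrict, Submodule.range_subtype]
  rfl

lemma pureSES_cyc_iff (K : Cx R) (i : ℤ) :
    PureSES R (cyc R K i).subtype (cycMap R K i) ↔
      ∀ A : ModuleCat.{u} R, Module.FinitePresentation R A →
        ∀ g : A ⟶ K.X (i - 1), g ≫ K.d (i - 1) (i - 1 - 1) = 0 →
          ∃ h : A ⟶ K.X i, h ≫ K.d i (i - 1) = g := by
  constructor
  · rintro ⟨hses, hhom⟩ A hA
    exact (surjective_comp_cycMap_iff K i A).1 ((homExact_iff_surjective hses).1 hhom A hA)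
  · intro hl
    have hses : ModSES R (cyc R K i).subtype (cycMap R K i) :=
      ⟨Subtype.val_injective, surjective_of_surjective_comp
        ((surjective_comp_cycMap_iff K i (ModuleCat.of R R)).2 (hl _ inferInstance)),
        exact_subtype_cycMap K i⟩
    exact ⟨hses, (homExact_iff_surjective hses).2 fun A _ _ hA =>
      (surjective_comp_cycMap_iff K i (ModuleCat.of R A)).2 (hl _ hA)⟩

lemma PureAcyclic.exists_comp_d_eq {K : Cx R} (hK : PureAcyclic R K) {A : ModuleCat.{u} R}
    (hA : Module.FinitePresentation R A) {i j k : ℤ} (hij : j + 1 = i) (hjk : k + 1 = j)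
    (g : A ⟶ K.X j) (hg : g ≫ K.d j k = 0) : ∃ h : A ⟶ K.X i, h ≫ K.d i j = g := by
  obtain rfl : j = i - 1 := by omega
  obtain rfl : k = i - 1 - 1 := by omega
  exact (pureSES_cyc_iff K i).1 (hK i) A hA g hg

noncomputable abbrev homFunctor (A : ModuleCat.{u} R) :
    Cx R ⥤ HomologicalComplex AddCommGrpCat.{u} (ComplexShape.down ℤ) :=
  (preadditiveCoyoneda.obj (Opposite.op A)).mapHomologicalComplex (ComplexShape.down ℤ)

lemma exactAt_homFunctor_obj_iff (A : ModuleCat.{u} R) (K : Cx R) (i : ℤ) :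
    ((homFunctor A).obj K).ExactAt (i - 1) ↔
      ∀ g : A ⟶ K.X (i - 1), g ≫ K.d (i - 1) (i - 1 - 1) = 0 →
        ∃ h : A ⟶ K.X i, h ≫ K.d i (i - 1) = g := by
  rw [HomologicalComplex.exactAt_iff' _ i (i - 1) (i - 1 - 1) (by simp) (by simp),
    ShortComplex.ab_exact_iff]
  rfl

lemma pureAcyclic_iff_acyclic_homFunctor (K : Cx R) :
    PureAcyclic R K ↔
      ∀ A : ModuleCat.{u} R, Module.FinitePresentation R A → ((homFunctor A).obj K).Acyclic := by
  simp only [PureAcyclic, pureSES_cyc_iff, ← exactAt_homFunctor_obj_iff]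
  refine ⟨fun h A hA j => ?_, fun h i A hA => h A hA (i - 1)⟩
  simpa using h (j + 1) A hA

end Cycles

section HomologySequence

open HomologicalComplex

variable {C ι : Type*} [Category C] [Abelian C] {c : ComplexShape ι}
  {S : ShortComplex (HomologicalComplex C c)}

lemma _root_.CategoryTheory.ShortComplex.ShortExact.quasiIso_g (hS : S.ShortExact)
    (h₁ : S.X₁.Acyclic) : QuasiIso S.g := by
  refine (quasiIso_iff _).2 fun i => (quasiIsoAt_iff_isIso_homologyMap _ i).2 ?_
  have : Mono (homologyMap S.g i) :=
    (hS.homology_exact₂ i).mono_g ((h₁ i).isZero_homology.eq_of_src _ _)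
  have : Epi (homologyMap S.g i) := by
    by_cases hi : ∃ j, c.Rel i j
    · obtain ⟨j, hij⟩ := hi
      exact (hS.homology_exact₃ i j hij).epi_f ((h₁ j).isZero_homology.eq_of_tgt _ _)
    · have := hS.epi_g
      exact epi_homologyMap_of_epi_of_not_rel S.g i (by simpa using hi)
  exact isIso_of_mono_of_epi _

lemma _root_.CategoryTheory.ShortComplex.ShortExact.quasiIso_f (hS : S.ShortExact)
    (h₃ : S.X₃.Acyclic) : QuasiIso S.f := by
  refine (quasiIso_iff _).2 fun i => (quasiIsoAt_iff_isIso_homologyMap _ i).2 ?_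
  have : Epi (homologyMap S.f i) :=
    (hS.homology_exact₂ i).epi_f ((h₃ i).isZero_homology.eq_of_tgt _ _)
  have : Mono (homologyMap S.f i) := by
    by_cases hi : ∃ j, c.Rel j i
    · obtain ⟨j, hji⟩ := hi
      exact (hS.homology_exact₁ j i hji).mono_g ((h₃ j).isZero_homology.eq_of_src _ _)
    · have := hS.mono_f
      exact mono_homologyMap_of_mono_of_not_rel S.f i (by simpa using hi)
  exact isIso_of_mono_of_epi _

end HomologySequence

section ShortExactSequences

variable {R} {L M N : Cx R} {α : L ⟶ M} {β : M ⟶ N}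

lemma CxSES.comp_f_eq_zero (hses : CxSES R α β) (i : ℤ) : α.f i ≫ β.f i = 0 := by
  ext x
  exact (hses i).2.2.apply_apply_eq_zero x

lemma CxSES.comp_eq_zero (hses : CxSES R α β) : α ≫ β = 0 := by
  ext i : 1
  exact hses.comp_f_eq_zero i

lemma CxSES.shortExact_f (hses : CxSES R α β) (i : ℤ) :
    (ShortComplex.mk (α.f i) (β.f i) (hses.comp_f_eq_zero i)).ShortExact :=
  ModuleCat.shortComplex_shortExact _ (hses i).2.2 (hses i).1 (hses i).2.1

lemma CxSES.shortExact (hses : CxSES R α β) :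
    (ShortComplex.mk α β hses.comp_eq_zero).ShortExact :=
  HomologicalComplex.shortExact_of_degreewise_shortExact _ hses.shortExact_f

lemma DegreewisePure.exists_comp_eq (hdp : DegreewisePure R α β) {A : ModuleCat.{u} R}
    (hA : Module.FinitePresentation R A) {i : ℤ} (y : A ⟶ N.X i) :
    ∃ x : A ⟶ M.X i, x ≫ β.f i = y := by
  obtain ⟨x, hx⟩ := (hdp i A hA).2.2 y.hom
  exact ⟨ModuleCat.ofHom x, ModuleCat.hom_ext hx⟩

lemma CxSES.shortExact_map_homFunctor (hses : CxSES R α β) (hdp : DegreewisePure R α β)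
    {A : ModuleCat.{u} R} (hA : Module.FinitePresentation R A) :
    ((ShortComplex.mk α β hses.comp_eq_zero).map (homFunctor A)).ShortExact := by
  refine HomologicalComplex.shortExact_of_degreewise_shortExact _ fun i => ?_
  have hSi := hses.shortExact_f i
  have := hSi.mono_f
  refine { exact := ?_, mono_f := ?_, epi_g := ?_ }
  · rw [ShortComplex.ab_exact_iff]
    exact fun x hx => ⟨hSi.exact.lift x hx, hSi.exact.lift_f x hx⟩
  · rw [AddCommGrpCat.mono_iff_injective]
    exact fun x y hxy => (cancel_mono (α.f i)).1 hxy
  · rw [AddCommGrpCat.epi_iff_surjective]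
    exact fun y => hdp.exists_comp_eq hA y

lemma pureAcyclic_left_iff_pureQuasiIso (hses : CxSES R α β) (hdp : DegreewisePure R α β) :
    PureAcyclic R L ↔ PureQuasiIso R β := by
  rw [pureAcyclic_iff_acyclic_homFunctor]
  refine forall₂_congr fun A hA => ?_
  have hS := hses.shortExact_map_homFunctor hdp hA
  exact ⟨hS.quasiIso_g, fun h => hS.acyclic_X₁ h⟩

lemma pureAcyclic_right_iff_pureQuasiIso (hses : CxSES R α β) (hdp : DegreewisePure R α β) :
    PureAcyclic R N ↔ PureQuasiIso R α := by
  rw [pureAcyclic_iff_acyclic_homFunctor]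
  refine forall₂_congr fun A hA => ?_
  have hS := hses.shortExact_map_homFunctor hdp hA
  exact ⟨hS.quasiIso_f, fun h => hS.acyclic_X₃ h⟩

end ShortExactSequences

lemma exists_seq_of_step {T : ℤ → Type*} [∀ i, Nonempty (T i)]
    (P : ∀ i, T i → T (i - 1) → Prop) (a b : ℤ)
    (hout : ∀ i, i < a ∨ b < i → ∀ x y, P i x y)
    (step : ∀ i (y : T (i - 1)) (z : T (i - 1 - 1)), P (i - 1) y z → ∃ x, P i x y) :
    ∃ s : ∀ i, T i, ∀ i, P i (s i) (s (i - 1)) := by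
  have key : ∀ n : ℕ, ∃ s : ∀ i, T i, ∀ i < a + n, P i (s i) (s (i - 1)) := by
    intro n
    induction n with
    | zero => exact ⟨fun _ => Classical.arbitrary _, fun i hi => hout i (Or.inl (by omega)) _ _⟩
    | succ n ih =>
      obtain ⟨s, hs⟩ := ih
      obtain ⟨x, hx⟩ := step (a + n) (s (a + n - 1)) (s (a + n - 1 - 1)) (hs _ (by omega))
      refine ⟨Function.update s (a + n) x, fun i hi => ?_⟩
      rw [Function.update_of_ne (show i - 1 ≠ a + n by omega)]
      rcases eq_or_ne i (a + n) with rfl | hne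
      · rwa [Function.update_self]
      · rw [Function.update_of_ne hne]
        exact hs i (by omega)
  obtain ⟨s, hs⟩ := key (b + 1 - a).toNat
  exact ⟨s, fun i =>
    if hi : i < a + (b + 1 - a).toNat then hs i hi else hout i (Or.inr (by omega)) _ _⟩

section Lifting

variable {R} {L M N A : Cx R} {α : L ⟶ M} {β : M ⟶ N}

/-- A cycle of `Hom(A, K)` is a family `φ p : A_p → K_{e p}`, with `e` a shift of degrees and `ε`
the sign in the differential of `Hom(A, K)`; only the components `ψ p (e p + 1)` of the
preimage `ψ` matter. Two-index families avoid casts between `K.X (e (p - 1) + 1)` and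
`K.X (e p)`. -/
lemma PureAcyclic.exists_eq_comp_d_add_d_comp {K : Cx R} (hK : PureAcyclic R K)
    (hA : BoundedFPCx R A) (ε : ℤ) (e : ℤ → ℤ) (he : ∀ p, e (p - 1) + 1 = e p)
    (φ : ∀ p, A.X p ⟶ K.X (e p))
    (hφ : ∀ p, φ p ≫ K.d (e p) (e (p - 1)) = ε • (A.d p (p - 1) ≫ φ (p - 1))) :
    ∃ ψ : ∀ p q, A.X p ⟶ K.X q, ∀ p r, e p + 1 = r →
      φ p = ψ p r ≫ K.d r (e p) + ε • (A.d p (p - 1) ≫ ψ (p - 1) (e p)) := by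
  obtain ⟨hfp, a, b, hzero⟩ := hA
  refine exists_seq_of_step (T := fun p => ∀ q, A.X p ⟶ K.X q)
    (fun p x y => ∀ r, e p + 1 = r → φ p = x r ≫ K.d r (e p) + ε • (A.d p (p - 1) ≫ y (e p)))
    a b (fun p hp x y r _ => ?_) fun p y z hyz => ?_
  · have := hzero p hp
    exact (ModuleCat.isZero_of_subsingleton (A.X p)).eq_of_src _ _
  set g := φ p - ε • (A.d p (p - 1) ≫ y (e p))
  have hg : g ≫ K.d (e p) (e (p - 1)) = 0 := by
    simp only [g, Preadditive.sub_comp, hφ, Category.assoc, Preadditive.comp_zsmul,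
      Preadditive.zsmul_comp, hyz (e p) (he p), Preadditive.comp_add,
      HomologicalComplex.d_comp_d_assoc, zero_comp, smul_zero, add_zero, sub_self]
  have hlift : ∀ r, ∃ x : A.X p ⟶ K.X r, e p + 1 = r → x ≫ K.d r (e p) = g := fun r =>
    if hr : e p + 1 = r then (hK.exists_comp_d_eq (hfp p) hr (he p) g hg).imp fun _ h _ => h
    else ⟨0, fun h => absurd h hr⟩
  choose x hx using hlift
  exact ⟨x, fun r hr => by rw [hx r hr, sub_add_cancel]⟩

lemma exists_comp_eq_of_pureAcyclic_right (hdp : DegreewisePure R α β) (hN : PureAcyclic R N)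
    (hA : BoundedFPCx R A) (g : A ⟶ N) : ∃ h : A ⟶ M, h ≫ β = g := by
  obtain ⟨s, hs⟩ := hN.exists_eq_comp_d_add_d_comp hA 1 (fun p => p) (fun p => by omega) g.f
    (fun p => by simp)
  choose t ht using fun p q => hdp.exists_comp_eq (hA.1 p) (s p q)
  refine ⟨Homotopy.nullHomotopicMap t, ?_⟩
  ext p : 1
  rw [Homotopy.nullHomotopicMap_comp, Homotopy.nullHomotopicMap_f (k₂ := p + 1) (k₀ := p - 1)
    (by simp) (by simp)]
  simp only [ht, hs p (p + 1) rfl, one_smul, add_comm]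

lemma exists_comp_eq_of_pureAcyclic_left (hses : CxSES R α β) (hdp : DegreewisePure R α β)
    (hL : PureAcyclic R L) (hA : BoundedFPCx R A) (g : A ⟶ N) : ∃ h : A ⟶ M, h ≫ β = g := by
  choose σ hσ using fun p => hdp.exists_comp_eq (hA.1 p) (g.f p)
  have hτ : ∀ p, ∃ τ : A.X p ⟶ L.X (p - 1),
      τ ≫ α.f (p - 1) = σ p ≫ M.d p (p - 1) - A.d p (p - 1) ≫ σ (p - 1) := fun p => by
    have hS := hses.shortExact_f (p - 1)
    have := hS.mono_f
    refine ⟨hS.exact.lift _ ?_, hS.exact.lift_f _ _⟩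
    change (σ p ≫ M.d p (p - 1) - A.d p (p - 1) ≫ σ (p - 1)) ≫ β.f (p - 1) = 0
    rw [Preadditive.sub_comp, Category.assoc, Category.assoc, ← β.comm, reassoc_of% (hσ p), hσ,
      g.comm, sub_self]
  choose τ hτ using hτ
  have hcyc : ∀ p, τ p ≫ L.d (p - 1) (p - 1 - 1) = (-1 : ℤ) • (A.d p (p - 1) ≫ τ (p - 1)) := by
    intro p
    have : Mono (α.f (p - 1 - 1)) := (hses.shortExact_f (p - 1 - 1)).mono_f
    rw [← cancel_mono (α.f (p - 1 - 1))]
    simp only [Category.assoc, ← α.comm, reassoc_of% (hτ p), Preadditive.sub_comp,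
      HomologicalComplex.d_comp_d, comp_zero, zero_sub, neg_one_zsmul, Preadditive.neg_comp]
    rw [hτ, Preadditive.comp_sub, HomologicalComplex.d_comp_d_assoc, zero_comp, sub_zero]
  obtain ⟨μ, hμ⟩ :=
    hL.exists_eq_comp_d_add_d_comp hA (-1) (fun p => p - 1) (fun p => by omega) τ hcyc
  refine ⟨{ f := fun p => σ p - μ p p ≫ α.f p, comm' := fun i j hij => ?_ }, ?_⟩
  · obtain rfl : j = i - 1 := by simp at hij; omega
    have hμi : μ i i ≫ L.d i (i - 1) = τ i + A.d i (i - 1) ≫ μ (i - 1) (i - 1) := by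
      rw [hμ i i (by omega)]
      simp
    simp only [Preadditive.sub_comp, Preadditive.comp_sub, Category.assoc, α.comm,
      reassoc_of% hμi, Preadditive.add_comp, hτ]
    abel
  · ext p : 1
    simp [hσ, hses.comp_f_eq_zero]

lemma cxPure_of_pureAcyclic (hses : CxSES R α β) (hdp : DegreewisePure R α β)
    (h : PureAcyclic R L ∨ PureAcyclic R N) : CxPure R α β := by
  intro A hA
  have hS := hses.shortExact
  have := hS.mono_f
  refine ⟨fun x y hxy => (cancel_mono α).1 hxy,
    fun y => ⟨fun hy => ⟨hS.exact.lift y hy, hS.exact.lift_f y hy⟩, ?_⟩, fun g => ?_⟩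
  · rintro ⟨x, rfl⟩
    simp [hses.comp_eq_zero]
  · rcases h with hL | hN
    exacts [exists_comp_eq_of_pureAcyclic_left hses hdp hL hA g,
      exists_comp_eq_of_pureAcyclic_right hdp hN hA g]

end Lifting

section Disk

variable {R}

noncomputable abbrev disk (A : ModuleCat.{u} R) (i : ℤ) : Cx R :=
  HomologicalComplex.double (𝟙 A) (show (ComplexShape.down ℤ).Rel i (i - 1) by simp)

lemma boundedFPCx_disk {A : ModuleCat.{u} R} (hA : Module.FinitePresentation R A) (i : ℤ) :
    BoundedFPCx R (disk A i) := by
  have hzero : ∀ k, k ≠ i → k ≠ i - 1 → Subsingleton ((disk A i).X k) := fun k h₀ h₁ =>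
    ModuleCat.subsingleton_of_isZero (HomologicalComplex.isZero_double_X _ _ k h₀ h₁)
  refine ⟨fun k => ?_, i - 1, i, fun k hk => hzero k (by omega) (by omega)⟩
  by_cases h₀ : k = i
  · subst h₀
    exact .of_equiv (HomologicalComplex.doubleXIso₀ _ _).toLinearEquiv.symm
  by_cases h₁ : k = i - 1
  · subst h₁
    exact .of_equiv (HomologicalComplex.doubleXIso₁ _ _ (by omega)).toLinearEquiv.symm
  have := hzero k h₀ h₁
  have := Module.Free.of_subsingleton R ((disk A i).X k)
  exact Module.finitePresentation_of_projective _ _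

variable {L M N : Cx R} {α : L ⟶ M} {β : M ⟶ N}

lemma degreewisePure_of_cxPure (hses : CxSES R α β) (hcp : CxPure R α β) :
    DegreewisePure R α β := by
  intro i
  refine (homExact_iff_surjective (hses i)).2 fun A _ _ hA y => ?_
  let e := HomologicalComplex.evalCompCoyonedaCorepresentableByDoubleId
    (show (ComplexShape.down ℤ).Rel i (i - 1) by simp) (by omega) (ModuleCat.of R A)
  obtain ⟨Φ, hΦ⟩ := (hcp _ (boundedFPCx_disk hA i)).2.2 (e.homEquiv.symm (ModuleCat.ofHom y))
  refine ⟨(e.homEquiv Φ).hom, ?_⟩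
  have hcomp : e.homEquiv (Φ ≫ β) = e.homEquiv Φ ≫ β.f i := e.homEquiv_comp β Φ
  rw [show Φ ≫ β = _ from hΦ] at hcomp
  exact congrArg ModuleCat.Hom.hom ((e.homEquiv.apply_symm_apply _).symm.trans hcomp).symm

end Disk

/-- Proposition 2.5: pure-acyclicity of the ends of a degreewise pure
short exact sequence of complexes versus pure quasi-isomorphisms; in particular a
pure-acyclic subcomplex is a pure subcomplex iff it is a degreewise pure subcomplex. -/
theorem statement2 :
    (∀ (L M N : Cx R) (α : L ⟶ M) (β : M ⟶ N), CxSES R α β → DegreewisePure R α β →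
      ((PureAcyclic R L ↔ PureQuasiIso R β) ∧
       (PureAcyclic R N ↔ PureQuasiIso R α) ∧
       ((PureAcyclic R L ∨ PureAcyclic R N) → CxPure R α β))) ∧
    (∀ (P M Q : Cx R) (ι : P ⟶ M) (π : M ⟶ Q), CxSES R ι π → PureAcyclic R P →
      (CxPure R ι π ↔ DegreewisePure R ι π)) :=
  ⟨fun _ _ _ _ _ hses hdp =>
    ⟨pureAcyclic_left_iff_pureQuasiIso hses hdp, pureAcyclic_right_iff_pureQuasiIso hses hdp,
      cxPure_of_pureAcyclic hses hdp⟩,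
   fun _ _ _ _ _ hses hP =>
    ⟨degreewisePure_of_cxPure hses, fun hdp => cxPure_of_pureAcyclic hses hdp (Or.inl hP)⟩⟩

end PaperPM
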